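/- Let S be a closed connected LNE subset of the unit sphere S^{n-1} in R^n and Ŝ⁺ the non-negative cone over S with vertex 0. Then for any R > 0, the set Ŝ⁺ \ {x : |x| < R} (the cone truncated below radius R) is Lipschitz normally embedded. -/

import Mathlib

/-!
Write `x = t • u`, `y = s • v` with `t = ‖x‖ ≤ s = ‖y‖` and `u, v ∈ S`. Scaling a near-optimal
path of `S` from `u` to `v` by `t`, and then following the radial segment from `t • v` to `s • v`,
gives a path in the cone outside the ball of radius `R` of length at most
`t L ‖u - v‖ + (s - t)`. Both terms are bounded by `‖x - y‖`, because
`‖x - y‖² = (s - t)² + t s ‖u - v‖²` for unit vectors `u, v`.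
-/

open scoped ENNReal

noncomputable def pathLength {E : Type*} [PseudoEMetricSpace E] (γ : ℝ → E) : ℝ≥0∞ :=
  eVariationOn γ (Set.Icc 0 1)

noncomputable def innerDist {E : Type*} [PseudoEMetricSpace E] (S : Set E) (x y : E) : ℝ≥0∞ :=
  ⨅ (γ : ℝ → E) (_ : ContinuousOn γ (Set.Icc 0 1)) (_ : γ 0 = x) (_ : γ 1 = y)
    (_ : γ '' Set.Icc 0 1 ⊆ S), pathLength γ

def IsLNEWith {E : Type*} [NormedAddCommGroup E] (L : ℝ) (S : Set E) : Prop :=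
  ∀ x ∈ S, ∀ y ∈ S, innerDist S x y ≤ ENNReal.ofReal (L * dist x y)

def IsLNE {E : Type*} [NormedAddCommGroup E] (S : Set E) : Prop :=
  ∃ L > 0, IsLNEWith L S

def nonnegCone {n : ℕ} (S : Set (EuclideanSpace ℝ (Fin n))) : Set (EuclideanSpace ℝ (Fin n)) :=
  {x | ∃ t : ℝ, 0 ≤ t ∧ ∃ u ∈ S, x = t • u}

open Set

lemma mapsTo_mul_add_Icc {a b c d : ℝ} (ha : 0 < a) (h₀ : a * c + b = 0)
    (h₁ : a * d + b = 1) :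
    MapsTo (a * · + b) (Icc c d) (Icc 0 1) := by
  rw [← h₀, ← h₁, ← image_affine_Icc' ha]
  exact mapsTo_image _ _

section PathTrans

variable {E : Type*} {S : Set E} {γ₁ γ₂ : ℝ → E}

noncomputable def pathTrans (γ₁ γ₂ : ℝ → E) (θ : ℝ) : E :=
  if θ ≤ 1 / 2 then γ₁ (2 * θ) else γ₂ (2 * θ - 1)

-- The halves are written as `γ ∘ (a * · + b)` to match `eVariationOn_comp_mul_add`.
lemma pathTrans_eqOn_left : EqOn (pathTrans γ₁ γ₂) (γ₁ ∘ (2 * · + 0)) (Iic (1 / 2)) :=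
  fun θ (hθ : θ ≤ 1 / 2) => by
    simp only [pathTrans, if_pos hθ, Function.comp_apply, add_zero]

lemma pathTrans_eqOn_right (h : γ₁ 1 = γ₂ 0) :
    EqOn (pathTrans γ₁ γ₂) (γ₂ ∘ (2 * · + -1)) (Ici (1 / 2)) := by
  intro θ (hθ : 1 / 2 ≤ θ)
  rcases hθ.eq_or_lt with rfl | hθ
  · norm_num [pathTrans, h]
  · simp only [pathTrans, if_neg (not_le.mpr hθ), Function.comp_apply, sub_eq_add_neg]

lemma pathTrans_image_subset (h₁ : γ₁ '' Icc 0 1 ⊆ S) (h₂ : γ₂ '' Icc 0 1 ⊆ S)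
    (h : γ₁ 1 = γ₂ 0) :
    pathTrans γ₁ γ₂ '' Icc 0 1 ⊆ S := by
  rintro _ ⟨θ, ⟨hθ₀, hθ₁⟩, rfl⟩
  rcases le_total θ (1 / 2) with hθ | hθ
  · rw [pathTrans_eqOn_left hθ]
    exact h₁ (mem_image_of_mem _ (mapsTo_mul_add_Icc two_pos (by norm_num) (by norm_num)
      (⟨hθ₀, hθ⟩ : θ ∈ Icc 0 (1 / 2))))
  · rw [pathTrans_eqOn_right h hθ]
    exact h₂ (mem_image_of_mem _ (mapsTo_mul_add_Icc two_pos (by norm_num) (by norm_num)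
      (⟨hθ, hθ₁⟩ : θ ∈ Icc (1 / 2) 1)))

end PathTrans

section PathLength

variable {E : Type*} [PseudoEMetricSpace E] {S : Set E} {x y : E}

lemma innerDist_le_pathLength {γ : ℝ → E} (hγ : ContinuousOn γ (Icc 0 1)) (h0 : γ 0 = x)
    (h1 : γ 1 = y) (hS : γ '' Icc 0 1 ⊆ S) : innerDist S x y ≤ pathLength γ :=
  iInf₂_le_of_le γ hγ <| iInf₂_le_of_le h0 h1 <| iInf_le _ hS

lemma innerDist_self (hx : x ∈ S) : innerDist S x x = 0 := by
  refine nonpos_iff_eq_zero.mp <| (innerDist_le_pathLength (γ := fun _ => x)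
    continuousOn_const rfl rfl ?_).trans_eq <| eVariationOn.constant_on ?_
  · rintro _ ⟨_, _, rfl⟩
    exact hx
  · simp

lemma eVariationOn_comp_mul_add (γ : ℝ → E) {a : ℝ} (ha : 0 < a) (b c d : ℝ) :
    eVariationOn (γ ∘ (a * · + b)) (Icc c d) = eVariationOn γ (Icc (a * c + b) (a * d + b)) := by
  have hmono : Monotone (a * · + b) := fun _ _ h =>
    add_le_add_left (mul_le_mul_of_nonneg_left h ha.le) b
  rw [eVariationOn.comp_eq_of_monotoneOn _ _ (hmono.monotoneOn _), image_affine_Icc' ha]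

lemma pathLength_comp_one_sub (γ : ℝ → E) : pathLength (γ ∘ (1 - ·)) = pathLength γ := by
  have hanti : Antitone (fun θ : ℝ => 1 - θ) := fun _ _ h => sub_le_sub_left h 1
  rw [pathLength, pathLength, eVariationOn.comp_eq_of_antitoneOn _ _ (hanti.antitoneOn _),
    image_const_sub_Icc, sub_zero, sub_self]

lemma innerDist_le_innerDist_swap (S : Set E) (x y : E) : innerDist S x y ≤ innerDist S y x := by
  simp only [innerDist, le_iInf_iff]
  intro γ hγ h0 h1 hS
  have hflip : MapsTo (fun θ : ℝ => 1 - θ) (Icc 0 1) (Icc 0 1) := fun θ hθ => by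
    simp only [mem_Icc] at hθ ⊢; constructor <;> linarith
  refine (iInf₂_le_of_le (γ ∘ (1 - ·)) (hγ.comp (by fun_prop) hflip) <|
    iInf₂_le_of_le (by simp [h1]) (by simp [h0]) <| iInf_le _ ?_).trans_eq
    (pathLength_comp_one_sub γ)
  rw [image_comp]
  exact (image_mono hflip.image_subset).trans hS

lemma innerDist_comm (S : Set E) (x y : E) : innerDist S x y = innerDist S y x :=
  (innerDist_le_innerDist_swap S x y).antisymm (innerDist_le_innerDist_swap S y x)

section PathTrans

variable {γ₁ γ₂ : ℝ → E}

lemma ContinuousOn.pathTrans (hγ₁ : ContinuousOn γ₁ (Icc 0 1)) (hγ₂ : ContinuousOn γ₂ (Icc 0 1))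
    (h : γ₁ 1 = γ₂ 0) : ContinuousOn (pathTrans γ₁ γ₂) (Icc 0 1) := by
  rw [← Icc_union_Icc_eq_Icc (by norm_num : (0 : ℝ) ≤ 1 / 2) (by norm_num)]
  refine ContinuousOn.union_of_isClosed ?_ ?_ isClosed_Icc isClosed_Icc
  · refine (hγ₁.comp (by fun_prop) (mapsTo_mul_add_Icc two_pos ?_ ?_)).congr
      (pathTrans_eqOn_left.mono Icc_subset_Iic_self) <;> norm_num
  · refine (hγ₂.comp (by fun_prop) (mapsTo_mul_add_Icc two_pos ?_ ?_)).congr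
      ((pathTrans_eqOn_right h).mono Icc_subset_Ici_self) <;> norm_num

lemma pathLength_pathTrans (h : γ₁ 1 = γ₂ 0) :
    pathLength (pathTrans γ₁ γ₂) = pathLength γ₁ + pathLength γ₂ := by
  have hsplit := eVariationOn.Icc_add_Icc (pathTrans γ₁ γ₂) (by norm_num : (0 : ℝ) ≤ 1 / 2)
    (by norm_num : (1 / 2 : ℝ) ≤ 1) (mem_univ _)
  simp only [univ_inter] at hsplit
  rw [pathLength, ← hsplit,
    eVariationOn.eq_of_eqOn (pathTrans_eqOn_left.mono Icc_subset_Iic_self),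
    eVariationOn.eq_of_eqOn ((pathTrans_eqOn_right h).mono Icc_subset_Ici_self),
    eVariationOn_comp_mul_add _ two_pos, eVariationOn_comp_mul_add _ two_pos]
  norm_num [pathLength]

end PathTrans

lemma innerDist_triangle (S : Set E) (x y z : E) :
    innerDist S x z ≤ innerDist S x y + innerDist S y z := by
  simp only [innerDist, ENNReal.iInf_add, ENNReal.add_iInf, le_iInf_iff]
  intro γ₂ hγ₂ h₂0 h₂1 hS₂ γ₁ hγ₁ h₁0 h₁1 hS₁
  have h : γ₁ 1 = γ₂ 0 := h₁1.trans h₂0.symm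
  exact (innerDist_le_pathLength (hγ₁.pathTrans hγ₂ h) (by simp [pathTrans, h₁0])
    (by norm_num [pathTrans, h₂1]) (pathTrans_image_subset hS₁ hS₂ h)).trans_eq
    (pathLength_pathTrans h)

lemma LipschitzOnWith.innerDist_le {F : Type*} [EMetricSpace F] {T : Set F} {f : E → F}
    {K : NNReal} (hf : LipschitzOnWith K f S) (hfST : MapsTo f S T) (hx : x ∈ S) (hy : y ∈ S) :
    innerDist T (f x) (f y) ≤ K * innerDist S x y := by
  rcases eq_or_ne K 0 with rfl | hK
  · have hfxy : f x = f y := by simpa using hf hx hy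
    rw [hfxy, innerDist_self (hfST hy)]
    simp
  simp only [innerDist, ENNReal.mul_iInf_of_ne (ENNReal.coe_ne_zero.mpr hK) ENNReal.coe_ne_top,
    le_iInf_iff]
  intro γ hγ h0 h1 hγS
  have hmaps : MapsTo γ (Icc 0 1) S := fun θ hθ => hγS (mem_image_of_mem γ hθ)
  refine (innerDist_le_pathLength (hf.continuousOn.comp hγ hmaps) (by simp [h0]) (by simp [h1])
    ?_).trans (hf.comp_eVariationOn_le hmaps)
  rw [image_comp]
  exact (image_mono hγS).trans hfST.image_subset

end PathLength

lemma innerDist_le_edist_of_segment_subset {E : Type*} [SeminormedAddCommGroup E]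
    [NormedSpace ℝ E] {T : Set E} {x y : E} (h : segment ℝ x y ⊆ T) :
    innerDist T x y ≤ edist x y := by
  refine (innerDist_le_pathLength (γ := AffineMap.lineMap x y) (by fun_prop) (by simp) (by simp)
    (by rwa [← segment_eq_image_lineMap])).trans ?_
  calc pathLength (AffineMap.lineMap x y) = eVariationOn (AffineMap.lineMap x y ∘ id) (Icc 0 1) :=
        rfl
    _ ≤ nndist x y * eVariationOn id (Icc (0 : ℝ) 1) :=
        (lipschitzWith_lineMap x y).lipschitzOnWith.comp_eVariationOn_le (mapsTo_univ _ _)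
    _ = edist x y := by
        rw [← inter_self (Icc (0 : ℝ) 1), (monotone_id.monotoneOn _).eVariationOn_eq
          (left_mem_Icc.mpr zero_le_one) (right_mem_Icc.mpr zero_le_one)]
        simp only [id, sub_zero, ENNReal.ofReal_one, mul_one, edist_nndist]

section InnerProductSpace

variable {F : Type*} [NormedAddCommGroup F] [InnerProductSpace ℝ F] {u v : F}

lemma dist_smul_smul_sq_of_norm_eq_one (hu : ‖u‖ = 1) (hv : ‖v‖ = 1) (t s : ℝ) :
    dist (t • u) (s • v) ^ 2 = (s - t) ^ 2 + t * s * dist u v ^ 2 := by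
  rw [dist_eq_norm, dist_eq_norm, norm_sub_sq_real, norm_sub_sq_real, norm_smul, norm_smul,
    real_inner_smul_left, real_inner_smul_right, hu, hv, Real.norm_eq_abs, Real.norm_eq_abs]
  ring_nf
  rw [sq_abs, sq_abs]
  ring

lemma mul_dist_le_dist_smul_smul (hu : ‖u‖ = 1) (hv : ‖v‖ = 1) {t s : ℝ} (ht : 0 ≤ t)
    (hts : t ≤ s) : t * dist u v ≤ dist (t • u) (s • v) := by
  have hsq := dist_smul_smul_sq_of_norm_eq_one hu hv t s
  nlinarith [dist_nonneg (x := u) (y := v), dist_nonneg (x := t • u) (y := s • v),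
    mul_nonneg (mul_nonneg ht (sub_nonneg.mpr hts)) (sq_nonneg (dist u v))]

end InnerProductSpace

section NonnegCone

variable {n : ℕ} {S : Set (EuclideanSpace ℝ (Fin n))}

lemma exists_eq_norm_smul_of_mem_nonnegCone (hS : S ⊆ Metric.sphere 0 1)
    {x : EuclideanSpace ℝ (Fin n)} (hx : x ∈ nonnegCone S) : ∃ u ∈ S, x = ‖x‖ • u := by
  obtain ⟨t, ht, u, hu, rfl⟩ := hx
  refine ⟨u, hu, ?_⟩
  rw [norm_smul, mem_sphere_zero_iff_norm.mp (hS hu), mul_one, Real.norm_of_nonneg ht]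

lemma smul_mem_nonnegCone_diff (hS : S ⊆ Metric.sphere 0 1) {u : EuclideanSpace ℝ (Fin n)}
    (hu : u ∈ S) {r R : ℝ} (hr : 0 ≤ r) (hRr : R ≤ r) :
    r • u ∈ nonnegCone S \ {x | ‖x‖ < R} := by
  refine ⟨⟨r, hr, u, hu, rfl⟩, ?_⟩
  rw [mem_ofPred_eq, not_lt, norm_smul, mem_sphere_zero_iff_norm.mp (hS hu), mul_one,
    Real.norm_of_nonneg hr]
  exact hRr

lemma innerDist_nonnegCone_diff_le (hS : S ⊆ Metric.sphere 0 1) {L : ℝ} (hL : 0 ≤ L)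
    (hLNE : IsLNEWith L S) {R : ℝ} {x y : EuclideanSpace ℝ (Fin n)}
    (hx : x ∈ nonnegCone S \ {x | ‖x‖ < R}) (hy : y ∈ nonnegCone S \ {x | ‖x‖ < R})
    (hxy : ‖x‖ ≤ ‖y‖) :
    innerDist (nonnegCone S \ {x | ‖x‖ < R}) x y ≤ ENNReal.ofReal ((L + 1) * dist x y) := by
  obtain ⟨u, hu, hxu⟩ := exists_eq_norm_smul_of_mem_nonnegCone hS hx.1
  obtain ⟨v, hv, hyv⟩ := exists_eq_norm_smul_of_mem_nonnegCone hS hy.1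
  set T := nonnegCone S \ {x | ‖x‖ < R}
  set t := ‖x‖
  set s := ‖y‖
  have ht : 0 ≤ t := norm_nonneg x
  have hRt : R ≤ t := not_lt.mp hx.2
  have hv1 : ‖v‖ = 1 := mem_sphere_zero_iff_norm.mp (hS hv)
  have hsphere : innerDist T (t • u) (t • v) ≤ ENNReal.ofReal t * innerDist S u v := by
    rw [← Real.enorm_of_nonneg ht]
    exact (lipschitzWith_smul t).lipschitzOnWith.innerDist_le
      (fun w hw => smul_mem_nonnegCone_diff hS hw ht hRt) hu hv
  have hradial : innerDist T (t • v) (s • v) ≤ ENNReal.ofReal (s - t) := by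
    refine (innerDist_le_edist_of_segment_subset ?_).trans_eq ?_
    · rintro _ ⟨a, b, ha, hb, hab, rfl⟩
      rw [smul_smul, smul_smul, ← add_smul]
      exact smul_mem_nonnegCone_diff hS hv (by positivity) (hRt.trans (by nlinarith))
    · rw [edist_dist, dist_eq_norm, ← sub_smul, norm_smul, hv1, mul_one, Real.norm_eq_abs,
        abs_sub_comm, abs_of_nonneg (sub_nonneg.mpr hxy)]
  have harc : t * dist u v ≤ dist x y := by
    rw [hxu, hyv]
    exact mul_dist_le_dist_smul_smul (mem_sphere_zero_iff_norm.mp (hS hu)) hv1 ht hxy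
  have hnorm : s - t ≤ dist x y := by
    rw [dist_comm]
    exact norm_sub_norm_le y x
  calc innerDist T x y = innerDist T (t • u) (s • v) := by rw [← hxu, ← hyv]
    _ ≤ innerDist T (t • u) (t • v) + innerDist T (t • v) (s • v) := innerDist_triangle _ _ _ _
    _ ≤ ENNReal.ofReal t * ENNReal.ofReal (L * dist u v) + ENNReal.ofReal (s - t) :=
        add_le_add (hsphere.trans (mul_le_mul_right (hLNE u hu v hv) _)) hradial
    _ = ENNReal.ofReal (L * (t * dist u v) + (s - t)) := by
        rw [← ENNReal.ofReal_mul ht, ← ENNReal.ofReal_add (by positivity) (by linarith)]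
        ring_nf
    _ ≤ ENNReal.ofReal ((L + 1) * dist x y) := ENNReal.ofReal_le_ofReal (by nlinarith)

end NonnegCone

theorem cone_truncated_below_LNE_general {n : ℕ} (S : Set (EuclideanSpace ℝ (Fin n)))
    (hS : S ⊆ Metric.sphere (0 : EuclideanSpace ℝ (Fin n)) 1)
    (hLNE : IsLNE S)
    (R : ℝ) :
    IsLNE (nonnegCone S \ {x | ‖x‖ < R}) := by
  obtain ⟨L, hL, hSL⟩ := hLNE
  refine ⟨L + 1, by linarith, fun x hx y hy => ?_⟩
  rcases le_total ‖x‖ ‖y‖ with hxy | hyx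
  · exact innerDist_nonnegCone_diff_le hS hL.le hSL hx hy hxy
  · rw [innerDist_comm, dist_comm]
    exact innerDist_nonnegCone_diff_le hS hL.le hSL hy hx hyx

theorem cone_truncated_below_LNE {n : ℕ} (S : Set (EuclideanSpace ℝ (Fin n)))
    (hS : S ⊆ Metric.sphere (0 : EuclideanSpace ℝ (Fin n)) 1)
    (hclosed : IsClosed S) (hconn : IsConnected S) (hLNE : IsLNE S)
    (R : ℝ) (hR : 0 < R) :
    IsLNE (nonnegCone S \ {x | ‖x‖ < R}) :=
  cone_truncated_below_LNE_general S hS hLNE R
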